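/- Let λ and μ be palindrome partitions of the same integer n such that B(λ) and B(μ) have the same length. Then the number of zeros and ones of B(μ) agrees with that of B(λ) up to swapping zeros and ones; equivalently, the unordered pair {largest part of μ, number of parts of μ} equals the unordered pair {largest part of λ, number of parts of λ}. -/

import Mathlib

/-- A partition encoded as its list of parts in weakly decreasing order,
all parts positive. -/
def IsPartition (l : List ℕ) : Prop :=
  List.Pairwise (· ≥ ·) l ∧ ∀ x ∈ l, 0 < x

/-- Auxiliary: given the previous part and the remaining parts (read from the
smallest part upward), produce the rest of the boundary word. -/
def wordAux : ℕ → List ℕ → List Bool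
  | _, [] => []
  | prev, a :: rest => (false :: List.replicate (a - prev) true) ++ wordAux a rest

/-- `partitionWord l` is the word `B(λ)`: trace the southeast boundary of the
Young diagram of `λ` from southwest to northeast, recording `true` for each
horizontal step and `false` for each vertical step, then delete the initial
`true` and the final `false`. -/
def partitionWord (l : List ℕ) : List Bool :=
  match l.reverse with
  | [] => []
  | a :: rest => List.replicate (a - 1) true ++ wordAux a rest

/-- The conjugate (transpose) partition. -/
def conjugate (l : List ℕ) : List ℕ :=
  (List.range l.headI).map fun j => (l.filter fun x => decide (j < x)).length

/-- `PP n` is the number of palindrome partitions of `n`. -/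
noncomputable def PP (n : ℕ) : ℕ :=
  {l : List ℕ | IsPartition l ∧ l.sum = n ∧
    partitionWord l = (partitionWord l).reverse}.ncard

/-- `RCount n` is the number of partitions `λ` of `n` such that the partition
corresponding to the reversed word `B(λ)ʳ` is also a partition of `n`. -/
noncomputable def RCount (n : ℕ) : ℕ :=
  {l : List ℕ | IsPartition l ∧ l.sum = n ∧
    ∃ μ : List ℕ, IsPartition μ ∧ μ.sum = n ∧
      partitionWord μ = (partitionWord l).reverse}.ncard

/-- `T n k` is the number of nondecreasing sequences of `n` integers in
`[-k, k]` summing to zero. -/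
noncomputable def T (n k : ℕ) : ℕ :=
  {f : Fin n → ℤ | (∀ i j : Fin n, i ≤ j → f i ≤ f j) ∧
    (∀ i, -(k : ℤ) ≤ f i ∧ f i ≤ (k : ℤ)) ∧ ∑ i, f i = 0}.ncard

/-- `NRect a b` is the number of partitions of `a*b/2` with at most `a` parts,
each part at most `b`. -/
noncomputable def NRect (a b : ℕ) : ℕ :=
  {μ : Fin a → ℕ | (∀ i j : Fin a, i ≤ j → μ j ≤ μ i) ∧
    (∀ i, μ i ≤ b) ∧ ∑ i, μ i = a * b / 2}.ncard

/-!
Counting the cells of `λ` as the pairs (horizontal step, later vertical step) of its boundary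
gives `|λ| + 1 = inv B(λ) + λ₁ + r`, where `inv w` counts the pairs `1 … 0` in `w`. Reversal
exchanges the pairs `1 … 0` and `0 … 1`, which together number `(λ₁ - 1)(r - 1)`, so for a
palindrome `2 inv B(λ) = (λ₁ - 1)(r - 1)`, i.e. `(λ₁ + 1)(r + 1) = 2(|λ| + 1)`. As the length of
`B(λ)` is `λ₁ + r - 2`, both the sum and the product of `λ₁ + 1` and `r + 1` are fixed.
-/

def inversions : List Bool → ℕ
  | [] => 0
  | true :: w => w.count false + inversions w
  | false :: w => inversions w

lemma inversions_append (u v : List Bool) :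
    inversions (u ++ v) = inversions u + inversions v + u.count true * v.count false := by
  induction u with
  | nil => simp [inversions]
  | cons x u ih =>
    cases x
    · simp [inversions, ih]
    · simp [inversions, ih]; ring

@[simp]
lemma inversions_replicate_true (k : ℕ) : inversions (List.replicate k true) = 0 := by
  induction k with
  | zero => rfl
  | succ k ih => simp [List.replicate_succ, inversions, ih, List.count_replicate]

lemma inversions_add_inversions_reverse (w : List Bool) :
    inversions w + inversions w.reverse = w.count true * w.count false := by
  induction w with
  | nil => rfl
  | cons x w ih =>
    cases x <;> simp [inversions, inversions_append] <;> linarith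

lemma two_mul_inversions_of_eq_reverse {w : List Bool} (hw : w = w.reverse) :
    2 * inversions w = w.count true * w.count false := by
  rw [two_mul]
  nth_rw 2 [hw]
  exact inversions_add_inversions_reverse w

lemma count_false_wordAux (prev : ℕ) (m : List ℕ) :
    (wordAux prev m).count false = m.length := by
  induction m generalizing prev with
  | nil => rfl
  | cons a m ih => simp [wordAux, ih, List.count_replicate]

section wordAux

variable {prev : ℕ} {m : List ℕ}

lemma count_true_wordAux (h : (prev :: m).IsChain (· ≤ ·)) :
    (wordAux prev m).count true + prev = m.getLastD prev := by
  induction m generalizing prev with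
  | nil => simp [wordAux]
  | cons a m ih =>
    obtain ⟨hprev, hchain⟩ := List.isChain_cons_cons.mp h
    have := ih hchain
    simp only [wordAux, List.count_append, List.count_cons_of_ne Bool.false_ne_true,
      List.count_replicate_self, List.getLastD_cons]
    omega

lemma inversions_wordAux (h : (prev :: m).IsChain (· ≤ ·)) :
    inversions (wordAux prev m) + m.getLastD prev + prev * m.length = m.sum + prev := by
  induction m generalizing prev with
  | nil => simp [wordAux, inversions]
  | cons a m ih =>
    obtain ⟨hprev, hchain⟩ := List.isChain_cons_cons.mp h
    have := ih hchain
    have hsplit : (a - prev) * m.length + prev * m.length = a * m.length := by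
      rw [← add_mul, Nat.sub_add_cancel hprev]
    simp only [wordAux, inversions_append, List.cons_append, inversions,
      inversions_replicate_true, List.count_replicate_self,
      count_false_wordAux, List.getLastD_cons, List.sum_cons, List.length_cons]
    nlinarith

end wordAux

lemma IsPartition.exists_eq_reverse_cons {l : List ℕ} (hl : IsPartition l) (hne : l ≠ []) :
    ∃ b m, l = (b :: m).reverse ∧ 0 < b ∧ (b :: m).IsChain (· ≤ ·) := by
  obtain ⟨b, m, hrev⟩ := List.exists_cons_of_ne_nil (List.reverse_ne_nil_iff.mpr hne)
  have hl' : l = (b :: m).reverse := by rw [← hrev, List.reverse_reverse]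
  refine ⟨b, m, hl', hl.2 b (by simp [hl']), List.isChain_iff_pairwise.mpr ?_⟩
  rw [← hrev, List.pairwise_reverse]
  exact hl.1

lemma partitionWord_reverse_cons (b : ℕ) (m : List ℕ) :
    partitionWord (b :: m).reverse = List.replicate (b - 1) true ++ wordAux b m := by
  simp [partitionWord]

lemma headI_reverse_cons (b : ℕ) (m : List ℕ) : (b :: m).reverse.headI = m.getLastD b := by
  induction m using List.reverseRecOn <;> simp

section partitionWord

variable {l : List ℕ}

lemma IsPartition.count_true_partitionWord (hl : IsPartition l) (hne : l ≠ []) :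
    (partitionWord l).count true + 1 = l.headI := by
  obtain ⟨b, m, rfl, hb, hchain⟩ := hl.exists_eq_reverse_cons hne
  have := count_true_wordAux hchain
  rw [partitionWord_reverse_cons, headI_reverse_cons, List.count_append,
    List.count_replicate_self]
  omega

lemma IsPartition.count_false_partitionWord (hl : IsPartition l) (hne : l ≠ []) :
    (partitionWord l).count false + 1 = l.length := by
  obtain ⟨b, m, rfl, -, -⟩ := hl.exists_eq_reverse_cons hne
  rw [partitionWord_reverse_cons, List.count_append, count_false_wordAux]
  simp [List.count_replicate]

lemma IsPartition.sum_add_one (hl : IsPartition l) (hne : l ≠ []) :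
    l.sum + 1 = inversions (partitionWord l) + l.headI + l.length := by
  obtain ⟨b, m, rfl, hb, hchain⟩ := hl.exists_eq_reverse_cons hne
  have := inversions_wordAux hchain
  have hsplit : (b - 1) * m.length + m.length = b * m.length := by
    rw [Nat.sub_one_mul, Nat.sub_add_cancel (Nat.le_mul_of_pos_left _ hb)]
  rw [partitionWord_reverse_cons, inversions_append, inversions_replicate_true,
    List.count_replicate_self, count_false_wordAux, headI_reverse_cons]
  simp only [List.sum_reverse, List.sum_cons, List.length_reverse, List.length_cons]
  omega

lemma IsPartition.length_partitionWord (hl : IsPartition l) (hne : l ≠ []) :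
    (partitionWord l).length + 2 = l.headI + l.length := by
  have := hl.count_true_partitionWord hne
  have := hl.count_false_partitionWord hne
  rw [← List.count_true_add_count_false]
  omega

lemma IsPartition.succ_headI_mul_succ_length (hl : IsPartition l) (hne : l ≠ [])
    (hpal : partitionWord l = (partitionWord l).reverse) :
    (l.headI + 1) * (l.length + 1) = 2 * (l.sum + 1) := by
  have := two_mul_inversions_of_eq_reverse hpal
  rw [hl.sum_add_one hne, ← hl.count_true_partitionWord hne,
    ← hl.count_false_partitionWord hne]
  nlinarith

end partitionWord

lemma eq_and_eq_or_eq_and_eq_of_add_eq_of_mul_eq {a b c d : ℕ} (hs : a + b = c + d)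
    (hp : a * b = c * d) : (a = c ∧ b = d) ∨ (a = d ∧ b = c) := by
  have h : ((a : ℤ) - c) * ((a : ℤ) - d) = 0 := by
    have hs' : (a : ℤ) + b = c + d := by exact_mod_cast hs
    have hp' : (a : ℤ) * b = c * d := by exact_mod_cast hp
    linear_combination (a : ℤ) * hs' - hp'
  rcases mul_eq_zero.mp h with h | h
  · left; omega
  · right; omega

/-- two palindrome partitions of the same `n` whose words have
the same length have the same counts of zeros and ones up to swapping;
equivalently the unordered pair (largest part, number of parts) is the same. -/
theorem palindromePaper_stmt11 (n : ℕ) (l μ : List ℕ)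
    (hl : IsPartition l) (hlne : l ≠ []) (hlsum : l.sum = n)
    (hlpal : partitionWord l = (partitionWord l).reverse)
    (hμ : IsPartition μ) (hμne : μ ≠ []) (hμsum : μ.sum = n)
    (hμpal : partitionWord μ = (partitionWord μ).reverse)
    (hlen : (partitionWord μ).length = (partitionWord l).length) :
    (μ.headI = l.headI ∧ μ.length = l.length) ∨
      (μ.headI = l.length ∧ μ.length = l.headI) := by
  have hadd : (μ.headI + 1) + (μ.length + 1) = (l.headI + 1) + (l.length + 1) := by
    have := hl.length_partitionWord hlne
    have := hμ.length_partitionWord hμne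
    omega
  have hmul : (μ.headI + 1) * (μ.length + 1) = (l.headI + 1) * (l.length + 1) := by
    rw [hl.succ_headI_mul_succ_length hlne hlpal, hμ.succ_headI_mul_succ_length hμne hμpal,
      hlsum, hμsum]
  rcases eq_and_eq_or_eq_and_eq_of_add_eq_of_mul_eq hadd hmul with ⟨h₁, h₂⟩ | ⟨h₁, h₂⟩
  · exact Or.inl ⟨by omega, by omega⟩
  · exact Or.inr ⟨by omega, by omega⟩
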